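/- arXiv:2407.10731 — 9 statements merged into one kernel-verified Lean document; each statement's English description precedes it below -/
import Mathlib

section
/- Let Q be an invertible 2×2 complex matrix and let H = (Q⊗Q⊗Q)†(Q⊗Q⊗Q), an 8×8 matrix. If H_{ij} = 0 for some pair of indices i ≠ j, then H_{ij} = 0 for every pair of indices i ≠ j (i.e. H is diagonal). -/
open Matrix Kronecker

lemma kron_conjT {n m : Type*} (A : Matrix n n ℂ) (B : Matrix m m ℂ) :
    (A ⊗ₖ B)ᴴ = Aᴴ ⊗ₖ Bᴴ := by
  ext ⟨i1, i2⟩ ⟨j1, j2⟩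
  simp [conjTranspose_apply, mul_comm]

lemma fin2_eq (p : Fin 2) : p = 0 ∨ p = 1 := by revert p; decide

lemma fin2_ne (p q : Fin 2) (h : p ≠ q) : (p = 0 ∧ q = 1) ∨ (p = 1 ∧ q = 0) := by
  revert h; revert p q; decide

/-- For invertible `Q` (2×2, complex) and `H = (Q⊗Q⊗Q)ᴴ (Q⊗Q⊗Q)`,
if some off-diagonal entry of `H` vanishes then all off-diagonal entries vanish,
i.e. `H` is diagonal. -/
theorem stmt_4 (Q : Matrix (Fin 2) (Fin 2) ℂ) (hQ : IsUnit Q.det)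
    (H : Matrix (Fin 2 × Fin 2 × Fin 2) (Fin 2 × Fin 2 × Fin 2) ℂ)
    (hH : H = (Q ⊗ₖ (Q ⊗ₖ Q))ᴴ * (Q ⊗ₖ (Q ⊗ₖ Q)))
    (h0 : ∃ i j, i ≠ j ∧ H i j = 0) :
    ∀ i j, i ≠ j → H i j = 0 := by
  set G : Matrix (Fin 2) (Fin 2) ℂ := Qᴴ * Q with hG
  have hHG : H = G ⊗ₖ (G ⊗ₖ G) := by
    rw [hH, kron_conjT, kron_conjT, Matrix.mul_kronecker_mul,
      Matrix.mul_kronecker_mul]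
  have hentry : ∀ i j : Fin 2 × Fin 2 × Fin 2,
      H i j = G i.1 j.1 * (G i.2.1 j.2.1 * G i.2.2 j.2.2) := by
    intro i j
    rw [hHG]
    rfl
  -- diagonal entries of G are nonzero
  have hGdiag : ∀ p : Fin 2, G p p ≠ 0 := by
    intro p hp
    have h1 : G p p = ((Complex.normSq (Q 0 p) + Complex.normSq (Q 1 p) : ℝ) : ℂ) := by
      simp only [hG, Matrix.mul_apply, conjTranspose_apply, Fin.sum_univ_two]
      push_cast
      rw [Complex.normSq_eq_conj_mul_self, Complex.normSq_eq_conj_mul_self]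
      rfl
    rw [h1] at hp
    have h2 : Complex.normSq (Q 0 p) + Complex.normSq (Q 1 p) = 0 := by
      exact_mod_cast hp
    have n0 := Complex.normSq_nonneg (Q 0 p)
    have n1 := Complex.normSq_nonneg (Q 1 p)
    have h3 : Q 0 p = 0 := Complex.normSq_eq_zero.mp (by linarith)
    have h4 : Q 1 p = 0 := Complex.normSq_eq_zero.mp (by linarith)
    have hdet : Q.det = 0 := by
      rw [Matrix.det_fin_two]
      rcases fin2_eq p with h | h <;> subst h <;> rw [h3, h4] <;> ring
    rw [hdet] at hQ
    exact (by simp : ¬ IsUnit (0 : ℂ)) hQ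
  have hherm : ∀ p q : Fin 2, G q p = (starRingEnd ℂ) (G p q) := by
    intro p q
    have h : Gᴴ = G := by rw [hG, conjTranspose_mul, conjTranspose_conjTranspose]
    conv_lhs => rw [← h]
    simp [conjTranspose_apply]
  -- the key: G is diagonal
  have hoff : ∀ p q : Fin 2, p ≠ q → G p q = 0 := by
    obtain ⟨i, j, hij, hHij⟩ := h0
    rw [hentry] at hHij
    have hfac : (G i.1 j.1 = 0 ∧ i.1 ≠ j.1) ∨ (G i.2.1 j.2.1 = 0 ∧ i.2.1 ≠ j.2.1)
        ∨ (G i.2.2 j.2.2 = 0 ∧ i.2.2 ≠ j.2.2) := by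
      rcases mul_eq_zero.mp hHij with h | h
      · exact Or.inl ⟨h, fun he => hGdiag _ (he ▸ h)⟩
      · rcases mul_eq_zero.mp h with h | h
        · exact Or.inr (Or.inl ⟨h, fun he => hGdiag _ (he ▸ h)⟩)
        · exact Or.inr (Or.inr ⟨h, fun he => hGdiag _ (he ▸ h)⟩)
    have key : G 0 1 = 0 ∧ G 1 0 = 0 := by
      have base : ∀ p q : Fin 2, p ≠ q → G p q = 0 → G 0 1 = 0 ∧ G 1 0 = 0 := by
        intro p q hpq h
        rcases fin2_ne p q hpq with ⟨hp, hq⟩ | ⟨hp, hq⟩ <;> subst hp <;> subst hq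
        · exact ⟨h, by rw [hherm 0 1, h, map_zero]⟩
        · refine ⟨?_, h⟩
          rw [hherm 1 0, h, map_zero]
      rcases hfac with ⟨h, hne⟩ | ⟨h, hne⟩ | ⟨h, hne⟩ <;> exact base _ _ hne h
    intro p q hpq
    rcases fin2_ne p q hpq with ⟨hp, hq⟩ | ⟨hp, hq⟩ <;> subst hp <;> subst hq
    · exact key.1
    · exact key.2
  intro i j hij
  rw [hentry]
  by_cases h1 : i.1 = j.1
  · by_cases h2 : i.2.1 = j.2.1
    · have h3 : i.2.2 ≠ j.2.2 := fun h3 => hij (Prod.ext h1 (Prod.ext h2 h3))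
      rw [hoff _ _ h3]; ring
    · rw [hoff _ _ h2]; ring
  · rw [hoff _ _ h1]; ring
end

section
/- Let A and B be 2×2 complex matrices satisfying AB = −BA, A² = I and B² = 0. Then for any complex numbers α₀, α₁, α₂, α₃, the 8×8 matrix R = α₀·B⊗B⊗B + α₁·A⊗A⊗B + α₂·A⊗B⊗A + α₃·B⊗A⊗A satisfies R⁵ = 0 (R is nilpotent); in particular R is never unitary. -/
open Matrix Kronecker

/-- For 2×2 complex matrices with `AB = -BA`, `A² = I`, `B² = 0`,
the matrix `R = α₀ B⊗B⊗B + α₁ A⊗A⊗B + α₂ A⊗B⊗A + α₃ B⊗A⊗A` satisfies `R⁵ = 0`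
(it is nilpotent); in particular `R` is never unitary. -/
theorem stmt_8 (A B : Matrix (Fin 2) (Fin 2) ℂ)
    (hAB : A * B = -(B * A)) (hA : A * A = 1) (hB : B * B = 0)
    (α₀ α₁ α₂ α₃ : ℂ) :
    (α₀ • (B ⊗ₖ (B ⊗ₖ B)) + α₁ • (A ⊗ₖ (A ⊗ₖ B)) +
        α₂ • (A ⊗ₖ (B ⊗ₖ A)) + α₃ • (B ⊗ₖ (A ⊗ₖ A))) ^ 5 = 0 ∧
      ¬ ((α₀ • (B ⊗ₖ (B ⊗ₖ B)) + α₁ • (A ⊗ₖ (A ⊗ₖ B)) +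
          α₂ • (A ⊗ₖ (B ⊗ₖ A)) + α₃ • (B ⊗ₖ (A ⊗ₖ A)))ᴴ *
        (α₀ • (B ⊗ₖ (B ⊗ₖ B)) + α₁ • (A ⊗ₖ (A ⊗ₖ B)) +
          α₂ • (A ⊗ₖ (B ⊗ₖ A)) + α₃ • (B ⊗ₖ (A ⊗ₖ A))) = 1) := by
  set R := α₀ • (B ⊗ₖ (B ⊗ₖ B)) + α₁ • (A ⊗ₖ (A ⊗ₖ B)) +
      α₂ • (A ⊗ₖ (B ⊗ₖ A)) + α₃ • (B ⊗ₖ (A ⊗ₖ A)) with hRdef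
  have hBA : B * A = -(A * B) := by rw [hAB, neg_neg]
  have h1 : ∀ x : Matrix (Fin 2) (Fin 2) ℂ, B * (A * x) = -(A * (B * x)) := by
    intro x; rw [← Matrix.mul_assoc, hBA, Matrix.neg_mul, Matrix.mul_assoc]
  have h3 : ∀ x : Matrix (Fin 2) (Fin 2) ℂ, B * (B * x) = 0 := by
    intro x; rw [← Matrix.mul_assoc, hB, Matrix.zero_mul]
  have w1 : A * B * (A * B) = 0 := by
    simp only [Matrix.mul_assoc, h1, h3, hB, Matrix.mul_zero, Matrix.mul_neg, neg_zero, neg_neg]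
  have w2 : A * B * (B * A) = 0 := by
    simp only [Matrix.mul_assoc, h1, h3, hB, Matrix.mul_zero, Matrix.mul_neg, neg_zero, neg_neg]
  have w3 : B * A * (A * B) = 0 := by
    simp only [Matrix.mul_assoc, h1, h3, hB, Matrix.mul_zero, Matrix.mul_neg, neg_zero, neg_neg]
  have w4 : B * A * (B * A) = 0 := by
    simp only [Matrix.mul_assoc, h1, h3, hB, Matrix.mul_zero, Matrix.mul_neg, neg_zero, neg_neg]
  have hR2 : R * R = (α₂*α₁) • (1 ⊗ₖ ((A*B) ⊗ₖ (B*A))) + (α₁*α₂) • (1 ⊗ₖ ((B*A) ⊗ₖ (A*B)))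
      + (α₃*α₁) • ((A*B) ⊗ₖ ((1 : Matrix (Fin 2) (Fin 2) ℂ) ⊗ₖ (B*A)))
      + (α₁*α₃) • ((B*A) ⊗ₖ ((1 : Matrix (Fin 2) (Fin 2) ℂ) ⊗ₖ (A*B)))
      + (α₃*α₂) • ((A*B) ⊗ₖ ((B*A) ⊗ₖ (1 : Matrix (Fin 2) (Fin 2) ℂ)))
      + (α₂*α₃) • ((B*A) ⊗ₖ ((A*B) ⊗ₖ (1 : Matrix (Fin 2) (Fin 2) ℂ))) := by
    rw [hRdef]
    simp only [Matrix.add_mul, Matrix.mul_add, Matrix.smul_mul, Matrix.mul_smul,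
      smul_add, smul_smul, ← Matrix.mul_kronecker_mul, hA, hB,
      Matrix.zero_kronecker, Matrix.kronecker_zero, smul_zero, add_zero, zero_add]
    abel
  have hR4 : R * R * (R * R) = 0 := by
    rw [hR2]
    simp only [Matrix.add_mul, Matrix.mul_add, Matrix.smul_mul, Matrix.mul_smul,
      smul_add, smul_smul, ← Matrix.mul_kronecker_mul, w1, w2, w3, w4,
      Matrix.one_mul, Matrix.mul_one,
      Matrix.zero_kronecker, Matrix.kronecker_zero, smul_zero, add_zero, zero_add]
  have h5 : R ^ 5 = 0 := by
    have h4 : R ^ 4 = 0 := by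
      rw [pow_succ, pow_succ, pow_succ, pow_succ, pow_zero, Matrix.one_mul,
        Matrix.mul_assoc (R * R) R R, hR4]
    rw [pow_succ, h4, Matrix.zero_mul]
  refine ⟨h5, fun h => ?_⟩
  have hunit : IsUnit R := ⟨⟨R, Rᴴ, mul_eq_one_comm.mp h, h⟩, rfl⟩
  have h0 : IsUnit (0 : Matrix (Fin 2 × Fin 2 × Fin 2) (Fin 2 × Fin 2 × Fin 2) ℂ) :=
    h5 ▸ hunit.pow 5
  exact not_isUnit_zero h0
end

section
/- Let A and B be 2×2 complex matrices with A Hermitian, A² = I, B² = 0, AB = −BA and B ≠ 0. For complex numbers α, β, γ, δ, the 8×8 matrix R = α·B⊗B⊗A + β·B⊗A⊗B + γ·A⊗B⊗B + δ·A⊗A⊗A is unitary if and only if α = β = γ = 0 and |δ| = 1. -/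
open Matrix Kronecker

theorem kronCT' {m n : Type*} [Fintype m] [Fintype n] (X : Matrix m m ℂ) (Y : Matrix n n ℂ) :
    (X ⊗ₖ Y)ᴴ = Xᴴ ⊗ₖ Yᴴ := by
  ext ⟨i, j⟩ ⟨k, l⟩
  simp [conjTranspose_apply, kroneckerMap_apply, mul_comm]

theorem tr_sq_fin2 (M : Matrix (Fin 2) (Fin 2) ℂ) :
    trace (M * M) = trace M * trace M - 2 * det M := by
  simp [Matrix.trace, Matrix.det_fin_two, Matrix.mul_apply, Fin.sum_univ_succ, Matrix.diag]
  ring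

/-- For 2×2 complex matrices with `A` Hermitian, `A² = I`, `B² = 0`,
`AB = -BA` and `B ≠ 0`, the matrix
`R = α B⊗B⊗A + β B⊗A⊗B + γ A⊗B⊗B + δ A⊗A⊗A` is unitary iff
`α = β = γ = 0` and `|δ| = 1`. -/
theorem stmt_10 (A B : Matrix (Fin 2) (Fin 2) ℂ)
    (hAh : Aᴴ = A) (hA : A * A = 1) (hB : B * B = 0)
    (hAB : A * B = -(B * A)) (hBne : B ≠ 0)
    (α β γ δ : ℂ) :
    (α • (B ⊗ₖ (B ⊗ₖ A)) + β • (B ⊗ₖ (A ⊗ₖ B)) +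
        γ • (A ⊗ₖ (B ⊗ₖ B)) + δ • (A ⊗ₖ (A ⊗ₖ A)))ᴴ *
      (α • (B ⊗ₖ (B ⊗ₖ A)) + β • (B ⊗ₖ (A ⊗ₖ B)) +
        γ • (A ⊗ₖ (B ⊗ₖ B)) + δ • (A ⊗ₖ (A ⊗ₖ A))) = 1 ↔
    α = 0 ∧ β = 0 ∧ γ = 0 ∧ ‖δ‖ = 1 := by
  constructor
  · intro h
    -- basic derived facts
    have hBh2 : Bᴴ * Bᴴ = 0 := by
      have := congrArg conjTranspose hB
      simpa [conjTranspose_mul] using this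
    have hBA : Bᴴ * A = -(A * Bᴴ) := by
      have := congrArg conjTranspose hAB
      simpa [conjTranspose_mul, hAh] using this
    have hBA2 : B * A = -(A * B) := by rw [hAB, neg_neg]
    have hBh2X : ∀ X : Matrix (Fin 2) (Fin 2) ℂ, Bᴴ * (Bᴴ * X) = 0 := by
      intro X; rw [← Matrix.mul_assoc, hBh2, Matrix.zero_mul]
    have hBBX : ∀ X : Matrix (Fin 2) (Fin 2) ℂ, B * (B * X) = 0 := by
      intro X; rw [← Matrix.mul_assoc, hB, Matrix.zero_mul]
    set p : ℂ := trace (Bᴴ * B) with hp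
    -- p ≠ 0
    have hpform : p = ((Complex.normSq (B 0 0) + Complex.normSq (B 1 0)
        + Complex.normSq (B 0 1) + Complex.normSq (B 1 1) : ℝ) : ℂ) := by
      rw [hp]
      simp [Matrix.trace, Matrix.mul_apply, Fin.sum_univ_succ, Matrix.diag,
        Matrix.conjTranspose_apply, ← Complex.normSq_eq_conj_mul_self]
      push_cast
      ring
    have hp0 : p ≠ 0 := by
      intro h0
      rw [h0] at hpform
      have hr : Complex.normSq (B 0 0) + Complex.normSq (B 1 0)
          + Complex.normSq (B 0 1) + Complex.normSq (B 1 1) = 0 := by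
        exact_mod_cast hpform.symm
      have h00 : B 0 0 = 0 := by
        have := Complex.normSq_nonneg (B 0 0); have := Complex.normSq_nonneg (B 1 0)
        have := Complex.normSq_nonneg (B 0 1); have := Complex.normSq_nonneg (B 1 1)
        exact Complex.normSq_eq_zero.mp (by linarith)
      have h10 : B 1 0 = 0 := by
        have := Complex.normSq_nonneg (B 0 0); have := Complex.normSq_nonneg (B 1 0)
        have := Complex.normSq_nonneg (B 0 1); have := Complex.normSq_nonneg (B 1 1)
        exact Complex.normSq_eq_zero.mp (by linarith)
      have h01 : B 0 1 = 0 := by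
        have := Complex.normSq_nonneg (B 0 0); have := Complex.normSq_nonneg (B 1 0)
        have := Complex.normSq_nonneg (B 0 1); have := Complex.normSq_nonneg (B 1 1)
        exact Complex.normSq_eq_zero.mp (by linarith)
      have h11 : B 1 1 = 0 := by
        have := Complex.normSq_nonneg (B 0 0); have := Complex.normSq_nonneg (B 1 0)
        have := Complex.normSq_nonneg (B 0 1); have := Complex.normSq_nonneg (B 1 1)
        exact Complex.normSq_eq_zero.mp (by linarith)
      apply hBne
      ext i j
      fin_cases i <;> fin_cases j <;> simpa [h00, h10, h01, h11]
    -- trace lemmas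
    have tA : trace (Bᴴ * A) = 0 := by
      have h1 : trace (Bᴴ * A) = trace (A * Bᴴ) := trace_mul_comm _ _
      have h2 : trace (Bᴴ * A) = -trace (A * Bᴴ) := by rw [hBA]; simp
      linear_combination (h1 + h2) / 2
    have tB : trace (A * B) = 0 := by
      have h1 : trace (A * B) = trace (B * A) := trace_mul_comm _ _
      have h2 : trace (A * B) = -trace (B * A) := by rw [hAB]; simp
      linear_combination (h1 + h2) / 2
    have hdetB : Matrix.det B = 0 := by
      have : Matrix.det B * Matrix.det B = 0 := by
        simpa [Matrix.det_mul] using congrArg Matrix.det hB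
      exact mul_self_eq_zero.mp this
    have t1 : trace (Bᴴ * (B * (Bᴴ * B))) = p * p := by
      have e : Bᴴ * (B * (Bᴴ * B)) = (Bᴴ * B) * (Bᴴ * B) := by
        rw [Matrix.mul_assoc]
      rw [e, tr_sq_fin2, Matrix.det_mul, hdetB, mul_zero, ← hp]
      ring
    have t2 : trace (Bᴴ * (A * (Bᴴ * B))) = 0 := by
      have e : Bᴴ * (A * (Bᴴ * B)) = 0 := by
        rw [← Matrix.mul_assoc, hBA, Matrix.neg_mul, Matrix.mul_assoc, hBh2X, Matrix.mul_zero,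
          neg_zero]
      rw [e, trace_zero]
    have t3 : trace (A * (B * (Bᴴ * B))) = 0 := by
      have e1 : A * (B * (Bᴴ * B)) = (A * (B * Bᴴ)) * B := by
        simp [Matrix.mul_assoc]
      rw [e1, trace_mul_comm]
      have e2 : B * (A * (B * Bᴴ)) = 0 := by
        rw [← Matrix.mul_assoc, hBA2, Matrix.neg_mul, Matrix.mul_assoc, hBBX, Matrix.mul_zero,
          neg_zero]
      rw [e2, trace_zero]
    have t4 : trace (A * (A * (Bᴴ * B))) = p := by
      rw [← Matrix.mul_assoc, hA, Matrix.one_mul]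
    -- the four trace equations
    have E0 := congrArg trace h
    have E1 := congrArg (fun M => trace (M * ((Bᴴ * B) ⊗ₖ ((Bᴴ * B) ⊗ₖ (1 : Matrix (Fin 2) (Fin 2) ℂ))))) h
    have E2 := congrArg (fun M => trace (M * ((Bᴴ * B) ⊗ₖ ((1 : Matrix (Fin 2) (Fin 2) ℂ) ⊗ₖ (Bᴴ * B))))) h
    have E3 := congrArg (fun M => trace (M * ((1 : Matrix (Fin 2) (Fin 2) ℂ) ⊗ₖ ((Bᴴ * B) ⊗ₖ (Bᴴ * B))))) h
    simp only [conjTranspose_add, conjTranspose_smul, kronCT', hAh, Matrix.add_mul,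
      Matrix.mul_add, smul_mul_assoc, mul_smul_comm, Matrix.one_mul,
      ← mul_kronecker_mul, trace_add, trace_smul, trace_kronecker, smul_smul, Complex.star_def,
      Matrix.mul_assoc, Matrix.mul_one, hA, t1, t2, t3, t4, tA, tB, ← hp,
      trace_one, smul_eq_mul, Fintype.card_fin, Fintype.card_prod, Nat.cast_ofNat,
      mul_zero, zero_mul, mul_one, one_mul, add_zero, zero_add] at E0 E1 E2 E3
    push_cast at E0
    have hp4 : p ^ 4 ≠ 0 := pow_ne_zero _ hp0
    have hab : (starRingEnd ℂ) α * α - (starRingEnd ℂ) β * β = 0 := by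
      have h1 : p ^ 4 * ((starRingEnd ℂ) α * α - (starRingEnd ℂ) β * β) = 0 := by
        linear_combination E1 - E2
      exact (mul_eq_zero.mp h1).resolve_left hp4
    have hac : (starRingEnd ℂ) α * α - (starRingEnd ℂ) γ * γ = 0 := by
      have h1 : p ^ 4 * ((starRingEnd ℂ) α * α - (starRingEnd ℂ) γ * γ) = 0 := by
        linear_combination E1 - E3
      exact (mul_eq_zero.mp h1).resolve_left hp4
    have ha0 : (starRingEnd ℂ) α * α = 0 := by
      have h1 : p ^ 4 * (10 * ((starRingEnd ℂ) α * α)) = 0 := by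
        linear_combination 4 * E1 - p ^ 2 * E0 + 2 * p ^ 4 * hab + 2 * p ^ 4 * hac
      have h2 := (mul_eq_zero.mp h1).resolve_left hp4
      have h3 : (10 : ℂ) ≠ 0 := by norm_num
      exact (mul_eq_zero.mp h2).resolve_left h3
    have hb0 : (starRingEnd ℂ) β * β = 0 := by linear_combination ha0 - hab
    have hc0 : (starRingEnd ℂ) γ * γ = 0 := by linear_combination ha0 - hac
    have hd' : (starRingEnd ℂ) δ * δ = 1 := by
      linear_combination E0 / 8 - (p ^ 2 / 4) * ha0 - (p ^ 2 / 4) * hb0 - (p ^ 2 / 4) * hc0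
    refine ⟨?_, ?_, ?_, ?_⟩
    · have : (Complex.normSq α : ℂ) = 0 := by
        rw [Complex.normSq_eq_conj_mul_self]; exact ha0
      exact Complex.normSq_eq_zero.mp (by exact_mod_cast this)
    · have : (Complex.normSq β : ℂ) = 0 := by
        rw [Complex.normSq_eq_conj_mul_self]; exact hb0
      exact Complex.normSq_eq_zero.mp (by exact_mod_cast this)
    · have : (Complex.normSq γ : ℂ) = 0 := by
        rw [Complex.normSq_eq_conj_mul_self]; exact hc0
      exact Complex.normSq_eq_zero.mp (by exact_mod_cast this)
    · have h1 : (Complex.normSq δ : ℂ) = 1 := by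
        rw [Complex.normSq_eq_conj_mul_self]; exact hd'
      have h2 : Complex.normSq δ = 1 := by exact_mod_cast h1
      have h3 : ‖δ‖ ^ 2 = 1 := by
        rw [← Complex.normSq_eq_norm_sq, h2]
      nlinarith [norm_nonneg δ]
  · rintro ⟨rfl, rfl, rfl, hd⟩
    have hd1 : (starRingEnd ℂ) δ * δ = 1 := by
      rw [← Complex.normSq_eq_conj_mul_self]
      norm_cast
      rw [Complex.normSq_eq_norm_sq, hd, one_pow]
    have hd2 : δ * (starRingEnd ℂ) δ = 1 := by rw [mul_comm]; exact hd1
    simp only [zero_smul, zero_add, conjTranspose_smul, kronCT', hAh,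
      smul_mul_assoc, mul_smul_comm, smul_smul, ← mul_kronecker_mul, hA,
      Matrix.one_kronecker_one, smul_smul, Complex.star_def, hd1, hd2, one_smul]
end

section
/- Let A and B be 2×2 Hermitian complex matrices with A² = B² = I and AB = −BA. Let α₀, α₁, α₂, α₃ be complex numbers satisfying α₀·conj(α₁) + α₁·conj(α₀) = α₂·conj(α₃) + α₃·conj(α₂), α₀·conj(α₂) + α₂·conj(α₀) = α₁·conj(α₃) + α₃·conj(α₁), α₀·conj(α₃) + α₃·conj(α₀) = α₁·conj(α₂) + α₂·conj(α₁), and |α₀|² + |α₁|² + |α₂|² + |α₃|² = 1. Then the 8×8 matrix R = α₀·B⊗B⊗B + α₁·A⊗A⊗B + α₂·A⊗B⊗A + α₃·B⊗A⊗A is unitary, with R⁻¹ = R† = conj(α₀)·B⊗B⊗B + conj(α₁)·A⊗A⊗B + conj(α₂)·A⊗B⊗A + conj(α₃)·B⊗A⊗A. -/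
open Matrix Kronecker

lemma kron_ct' {m n : Type*} (M : Matrix m m ℂ) (N : Matrix n n ℂ) :
    (M ⊗ₖ N)ᴴ = Mᴴ ⊗ₖ Nᴴ := by
  ext ⟨i,j⟩ ⟨k,l⟩
  simp [conjTranspose_apply, kroneckerMap_apply]

lemma neg_kron' {l m n p : Type*} (M : Matrix l m ℂ) (N : Matrix n p ℂ) :
    (-M) ⊗ₖ N = -(M ⊗ₖ N) := by
  ext ⟨i,j⟩ ⟨k,l⟩; simp [kroneckerMap_apply]

lemma kron_neg' {l m n p : Type*} (M : Matrix l m ℂ) (N : Matrix n p ℂ) :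
    M ⊗ₖ (-N) = -(M ⊗ₖ N) := by
  ext ⟨i,j⟩ ⟨k,l⟩; simp [kroneckerMap_apply]

/-- For 2×2 Hermitian matrices with `A² = B² = I`, `AB = -BA`, and
complex coefficients satisfying the stated reality conditions and the normalization
`|α₀|² + |α₁|² + |α₂|² + |α₃|² = 1`, the matrix
`R = α₀ B⊗B⊗B + α₁ A⊗A⊗B + α₂ A⊗B⊗A + α₃ B⊗A⊗A` is unitary, with
`R⁻¹ = Rᴴ = conj(α₀) B⊗B⊗B + conj(α₁) A⊗A⊗B + conj(α₂) A⊗B⊗A + conj(α₃) B⊗A⊗A`. -/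
theorem stmt_11 (A B : Matrix (Fin 2) (Fin 2) ℂ)
    (hAh : Aᴴ = A) (hBh : Bᴴ = B)
    (hA : A * A = 1) (hB : B * B = 1) (hAB : A * B = -(B * A))
    (α₀ α₁ α₂ α₃ : ℂ)
    (h1 : α₀ * star α₁ + α₁ * star α₀ = α₂ * star α₃ + α₃ * star α₂)
    (h2 : α₀ * star α₂ + α₂ * star α₀ = α₁ * star α₃ + α₃ * star α₁)
    (h3 : α₀ * star α₃ + α₃ * star α₀ = α₁ * star α₂ + α₂ * star α₁)
    (hnorm : ‖α₀‖ ^ 2 + ‖α₁‖ ^ 2 + ‖α₂‖ ^ 2 + ‖α₃‖ ^ 2 = 1)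
    (R S : Matrix (Fin 2 × Fin 2 × Fin 2) (Fin 2 × Fin 2 × Fin 2) ℂ)
    (hR : R = α₀ • (B ⊗ₖ (B ⊗ₖ B)) + α₁ • (A ⊗ₖ (A ⊗ₖ B)) +
        α₂ • (A ⊗ₖ (B ⊗ₖ A)) + α₃ • (B ⊗ₖ (A ⊗ₖ A)))
    (hS : S = star α₀ • (B ⊗ₖ (B ⊗ₖ B)) + star α₁ • (A ⊗ₖ (A ⊗ₖ B)) +
        star α₂ • (A ⊗ₖ (B ⊗ₖ A)) + star α₃ • (B ⊗ₖ (A ⊗ₖ A))) :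
    Rᴴ = S ∧ R * S = 1 ∧ S * R = 1 := by
  have hn : α₀ * star α₀ + α₁ * star α₁ + α₂ * star α₂ + α₃ * star α₃ = 1 := by
    have := congrArg (Complex.ofReal) hnorm
    push_cast at this
    simpa [Complex.mul_conj', Complex.mul_conj] using this
  subst hR hS
  refine ⟨?_, ?_, ?_⟩
  · simp only [conjTranspose_add, conjTranspose_smul, kron_ct', hAh, hBh]
  · simp only [Matrix.add_mul, Matrix.mul_add, Matrix.smul_mul, Matrix.mul_smul,
      smul_smul]
    simp only [← mul_kronecker_mul, hA, hB, hAB, neg_kron', kron_neg', smul_neg,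
      neg_neg, one_kronecker_one]
    match_scalars
    all_goals first
      | linear_combination hn
      | linear_combination h1 | linear_combination h2 | linear_combination h3
      | linear_combination -h1 | linear_combination -h2 | linear_combination -h3
      | ring
  · simp only [Matrix.add_mul, Matrix.mul_add, Matrix.smul_mul, Matrix.mul_smul,
      smul_smul]
    simp only [← mul_kronecker_mul, hA, hB, hAB, neg_kron', kron_neg', smul_neg,
      neg_neg, one_kronecker_one]
    match_scalars
    all_goals first
      | linear_combination hn
      | linear_combination h1 | linear_combination h2 | linear_combination h3
      | linear_combination -h1 | linear_combination -h2 | linear_combination -h3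
      | ring
end

section
/- Let Y be an operator on (ℂ^N)^{⊗2} satisfying the vertex Yang–Baxter equation, and let M be an N×N complex matrix such that Y·(M⊗M) = (M⊗M)·Y. Then both T = Y⊗M and T' = M⊗Y, viewed as operators on (ℂ^N)^{⊗3}, satisfy the vertex tetrahedron equation. -/
open Matrix Kronecker

/-- The operator on `(ℂ^N)^{⊗3}` acting as `Y` on the tensor factors `i, j`
and as the identity on the remaining factor. -/
noncomputable def emb2 {N : ℕ} (i j : Fin 3)
    (Y : Matrix (Fin N × Fin N) (Fin N × Fin N) ℂ) :
    Matrix (Fin 3 → Fin N) (Fin 3 → Fin N) ℂ :=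
  Matrix.of fun a b =>
    Y (a i, a j) (b i, b j) *
      ∏ l : Fin 3, if l = i ∨ l = j then 1 else (if a l = b l then 1 else 0)

/-- The vertex (constant) Yang-Baxter equation `Y₁₂ Y₁₃ Y₂₃ = Y₂₃ Y₁₃ Y₁₂`. -/
def YBEq {N : ℕ} (Y : Matrix (Fin N × Fin N) (Fin N × Fin N) ℂ) : Prop :=
  emb2 0 1 Y * emb2 0 2 Y * emb2 1 2 Y = emb2 1 2 Y * emb2 0 2 Y * emb2 0 1 Y

/-- The operator on `(ℂ^N)^{⊗6}` acting as `R` on the tensor factors `i, j, k`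
and as the identity on the remaining factors. -/
noncomputable def emb3 {N : ℕ} (i j k : Fin 6)
    (R : Matrix (Fin N × Fin N × Fin N) (Fin N × Fin N × Fin N) ℂ) :
    Matrix (Fin 6 → Fin N) (Fin 6 → Fin N) ℂ :=
  Matrix.of fun a b =>
    R (a i, a j, a k) (b i, b j, b k) *
      ∏ l : Fin 6, if l = i ∨ l = j ∨ l = k then 1 else (if a l = b l then 1 else 0)

/-- The vertex (constant) tetrahedron equation
`R₁₂₃ R₁₄₅ R₂₄₆ R₃₅₆ = R₃₅₆ R₂₄₆ R₁₄₅ R₁₂₃`. -/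
def TetraEq {N : ℕ}
    (R : Matrix (Fin N × Fin N × Fin N) (Fin N × Fin N × Fin N) ℂ) : Prop :=
  emb3 0 1 2 R * emb3 0 3 4 R * emb3 1 3 5 R * emb3 2 4 5 R =
    emb3 2 4 5 R * emb3 1 3 5 R * emb3 0 3 4 R * emb3 0 1 2 R

namespace Stmt13

variable {N : ℕ}

/-- Embed an operator on `(ℂ^N)^{⊗ι}` into `(ℂ^N)^{⊗κ}` along `f : ι → κ`. -/
def embG {ι κ : Type*} [Fintype ι] [Fintype κ] [DecidableEq κ]
    (f : ι → κ) (A : Matrix (ι → Fin N) (ι → Fin N) ℂ) :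
    Matrix (κ → Fin N) (κ → Fin N) ℂ :=
  Matrix.of fun a b => A (a ∘ f) (b ∘ f) *
    ∏ l : κ, if ∃ i, f i = l then 1 else (if a l = b l then 1 else 0)

lemma embG_comp {ι κ₁ κ₂ : Type*} [Fintype ι] [Fintype κ₁] [Fintype κ₂]
    [DecidableEq κ₁] [DecidableEq κ₂]
    (f : ι → κ₁) (g : κ₁ → κ₂) (hg : Function.Injective g)
    (A : Matrix (ι → Fin N) (ι → Fin N) ℂ) :
    embG g (embG f A) = embG (g ∘ f) A := by
  ext a b
  simp only [embG, Matrix.of_apply]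
  have h1 : ∏ l : κ₂, (if ∃ i, (g ∘ f) i = l then (1:ℂ) else if a l = b l then 1 else 0)
      = (∏ l' : κ₁, if ∃ i, f i = l' then (1:ℂ) else if a (g l') = b (g l') then 1 else 0)
        * ∏ l ∈ (Finset.univ.image g)ᶜ, (if a l = b l then (1:ℂ) else 0) := by
    rw [← Finset.prod_mul_prod_compl (Finset.univ.image g)]
    congr 1
    · rw [Finset.prod_image (fun x _ y _ h => hg h)]
      refine Finset.prod_congr rfl fun l' _ => ?_
      refine if_congr ?_ rfl rfl
      exact ⟨fun ⟨i, hi⟩ => ⟨i, hg hi⟩, fun ⟨i, hi⟩ => ⟨i, by simp [Function.comp, hi]⟩⟩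
    · refine Finset.prod_congr rfl fun l hl => ?_
      rw [if_neg]
      rintro ⟨i, rfl⟩
      simp at hl
  have h2 : ∏ l : κ₂, (if ∃ j, g j = l then (1:ℂ) else if a l = b l then 1 else 0)
      = ∏ l ∈ (Finset.univ.image g)ᶜ, (if a l = b l then (1:ℂ) else 0) := by
    rw [← Finset.prod_mul_prod_compl (Finset.univ.image g)]
    have : ∏ l ∈ Finset.univ.image g, (if ∃ j, g j = l then (1:ℂ) else if a l = b l then 1 else 0) = 1 := by
      refine Finset.prod_eq_one fun l hl => ?_
      simp only [Finset.mem_image, Finset.mem_univ, true_and] at hl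
      rw [if_pos hl]
    rw [this, one_mul]
    refine Finset.prod_congr rfl fun l hl => ?_
    rw [if_neg]
    rintro ⟨j, rfl⟩
    simp at hl
  rw [h1, h2]
  have : A ((a ∘ g) ∘ f) ((b ∘ g) ∘ f) = A (a ∘ g ∘ f) (b ∘ g ∘ f) := rfl
  rw [this]
  simp only [Function.comp_apply]
  ring

noncomputable def splitEquiv {ι κ : Type*} [Fintype ι] [DecidableEq κ]
    (f : ι → κ) (hf : Function.Injective f) :
    ((ι → Fin N) × ({l : κ // ¬∃ i, f i = l} → Fin N)) ≃ (κ → Fin N) where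
  toFun p l := if h : ∃ i, f i = l then p.1 h.choose else p.2 ⟨l, h⟩
  invFun c := (c ∘ f, fun l => c l.1)
  left_inv p := by
    obtain ⟨d, r⟩ := p
    refine Prod.ext ?_ ?_
    · funext i
      have h : ∃ j, f j = f i := ⟨i, rfl⟩
      simp only [Function.comp_apply, dif_pos h]
      exact congrArg d (hf h.choose_spec)
    · funext l
      simp only [dif_neg l.2]
  right_inv c := by
    funext l
    by_cases h : ∃ i, f i = l
    · simp only [dif_pos h, Function.comp_apply]
      exact congrArg c h.choose_spec
    · simp only [dif_neg h]

lemma splitEquiv_comp {ι κ : Type*} [Fintype ι] [DecidableEq κ]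
    (f : ι → κ) (hf : Function.Injective f) (d : ι → Fin N)
    (r : {l : κ // ¬∃ i, f i = l} → Fin N) :
    (splitEquiv f hf (d, r)) ∘ f = d :=
  congrArg Prod.fst ((splitEquiv f hf).left_inv (d, r))

lemma splitEquiv_not_mem {ι κ : Type*} [Fintype ι] [DecidableEq κ]
    (f : ι → κ) (hf : Function.Injective f) (d : ι → Fin N)
    (r : {l : κ // ¬∃ i, f i = l} → Fin N) (l : κ) (h : ¬∃ i, f i = l) :
    splitEquiv f hf (d, r) l = r ⟨l, h⟩ := by
  simp only [splitEquiv, Equiv.coe_fn_mk, dif_neg h]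

lemma embG_mul {ι κ : Type*} [Fintype ι] [DecidableEq ι] [Fintype κ] [DecidableEq κ]
    (f : ι → κ) (hf : Function.Injective f)
    (A B : Matrix (ι → Fin N) (ι → Fin N) ℂ) :
    embG f A * embG f B = embG f (A * B) := by
  ext a b
  simp only [embG, Matrix.of_apply, Matrix.mul_apply]
  rw [← Equiv.sum_comp (splitEquiv f hf) (M := ℂ), Fintype.sum_prod_type, Finset.sum_mul]
  refine Finset.sum_congr rfl fun d _ => ?_
  rw [Fintype.sum_eq_single (fun l => a l.1)]
  · have hc : (splitEquiv f hf (d, fun l => a l.1)) ∘ f = d := splitEquiv_comp f hf d _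
    set c := splitEquiv f hf (d, fun l => a l.1) with hcdef
    have h1 : ∏ l : κ, (if ∃ i, f i = l then (1:ℂ) else if a l = c l then 1 else 0) = 1 := by
      refine Finset.prod_eq_one fun l _ => ?_
      by_cases h : ∃ i, f i = l
      · rw [if_pos h]
      · rw [if_neg h, hcdef, splitEquiv_not_mem f hf d _ l h, if_pos rfl]
    have h2 : ∏ l : κ, (if ∃ i, f i = l then (1:ℂ) else if c l = b l then 1 else 0)
        = ∏ l : κ, (if ∃ i, f i = l then (1:ℂ) else if a l = b l then 1 else 0) := by
      refine Finset.prod_congr rfl fun l _ => ?_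
      by_cases h : ∃ i, f i = l
      · rw [if_pos h, if_pos h]
      · rw [if_neg h, if_neg h, hcdef, splitEquiv_not_mem f hf d _ l h]
    rw [hc, h1, h2]
    ring
  · intro r hr
    have : ∃ l₀ : {l : κ // ¬∃ i, f i = l}, r l₀ ≠ a l₀.1 := by
      by_contra h
      push_neg at h
      exact hr (funext h)
    obtain ⟨l₀, hl₀⟩ := this
    have hz : ∏ l : κ, (if ∃ i, f i = l then (1:ℂ)
        else if a l = splitEquiv f hf (d, r) l then 1 else 0) = 0 := by
      refine Finset.prod_eq_zero (Finset.mem_univ l₀.1) ?_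
      rw [if_neg l₀.2, splitEquiv_not_mem f hf d r l₀.1 l₀.2, if_neg]
      exact fun h => hl₀ h.symm
    rw [hz]
    ring

lemma embG_mul_disjoint {ι₁ ι₂ κ : Type*} [Fintype ι₁] [Fintype ι₂] [Fintype κ] [DecidableEq κ]
    (f : ι₁ → κ) (g : ι₂ → κ) (hfg : ∀ i j, f i ≠ g j)
    (A : Matrix (ι₁ → Fin N) (ι₁ → Fin N) ℂ) (B : Matrix (ι₂ → Fin N) (ι₂ → Fin N) ℂ) :
    embG f A * embG g B = Matrix.of fun a b => A (a ∘ f) (b ∘ f) * B (a ∘ g) (b ∘ g) *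
      ∏ l : κ, if (∃ i, f i = l) ∨ (∃ j, g j = l) then 1 else (if a l = b l then 1 else 0) := by
  ext a b
  simp only [embG, Matrix.of_apply, Matrix.mul_apply]
  rw [Fintype.sum_eq_single (fun l => if ∃ i, f i = l then b l else a l)]
  · set c : κ → Fin N := fun l => if ∃ i, f i = l then b l else a l with hc
    have hcp : ∀ l, (∃ i, f i = l) → c l = b l := by
      intro l h; simp only [hc]; rw [if_pos h]
    have hcn : ∀ l, ¬(∃ i, f i = l) → c l = a l := by
      intro l h; simp only [hc]; rw [if_neg h]
    have hcf : c ∘ f = b ∘ f := funext fun i => hcp (f i) ⟨i, rfl⟩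
    have hcg : c ∘ g = a ∘ g := funext fun j =>
      hcn (g j) (by rintro ⟨i, hi⟩; exact hfg i j hi)
    have h1 : ∏ l : κ, (if ∃ i, f i = l then (1:ℂ) else if a l = c l then 1 else 0) = 1 := by
      refine Finset.prod_eq_one fun l _ => ?_
      by_cases h : ∃ i, f i = l
      · rw [if_pos h]
      · rw [if_neg h, hcn l h, if_pos rfl]
    have h2 : ∏ l : κ, (if ∃ j, g j = l then (1:ℂ) else if c l = b l then 1 else 0)
        = ∏ l : κ, (if (∃ i, f i = l) ∨ (∃ j, g j = l) then (1:ℂ) else if a l = b l then 1 else 0) := by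
      refine Finset.prod_congr rfl fun l _ => ?_
      by_cases hg' : ∃ j, g j = l
      · rw [if_pos hg', if_pos (Or.inr hg')]
      · rw [if_neg hg']
        by_cases hf' : ∃ i, f i = l
        · rw [if_pos (Or.inl hf'), hcp l hf', if_pos rfl]
        · rw [if_neg (not_or.mpr ⟨hf', hg'⟩), hcn l hf']
    rw [hcf, hcg, h1, h2]
    ring
  · intro c hcne
    have : ∃ l₀ : κ, c l₀ ≠ (if ∃ i, f i = l₀ then b l₀ else a l₀) := by
      by_contra h
      push_neg at h
      exact hcne (funext h)
    obtain ⟨l₀, hl₀⟩ := this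
    by_cases h : ∃ i, f i = l₀
    · rw [if_pos h] at hl₀
      have hng : ¬∃ j, g j = l₀ := by
        rintro ⟨j, hj⟩
        obtain ⟨i, hi⟩ := h
        exact hfg i j (hi.trans hj.symm)
      have hz : ∏ l : κ, (if ∃ j, g j = l then (1:ℂ) else if c l = b l then 1 else 0) = 0 := by
        refine Finset.prod_eq_zero (Finset.mem_univ l₀) ?_
        rw [if_neg hng, if_neg hl₀]
      rw [hz]
      ring
    · rw [if_neg h] at hl₀
      have hz : ∏ l : κ, (if ∃ i, f i = l then (1:ℂ) else if a l = c l then 1 else 0) = 0 := by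
        refine Finset.prod_eq_zero (Finset.mem_univ l₀) ?_
        rw [if_neg h, if_neg (fun hh => hl₀ hh.symm)]
      rw [hz]
      ring

lemma embG_comm {ι₁ ι₂ κ : Type*} [Fintype ι₁] [Fintype ι₂] [Fintype κ] [DecidableEq κ]
    (f : ι₁ → κ) (g : ι₂ → κ) (hfg : ∀ i j, f i ≠ g j)
    (A : Matrix (ι₁ → Fin N) (ι₁ → Fin N) ℂ) (B : Matrix (ι₂ → Fin N) (ι₂ → Fin N) ℂ) :
    Commute (embG f A) (embG g B) := by
  unfold Commute SemiconjBy
  rw [embG_mul_disjoint f g hfg, embG_mul_disjoint g f (fun j i h => hfg i j h.symm)]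
  ext a b
  simp only [Matrix.of_apply]
  have hP : (∏ l : κ, if (∃ i, f i = l) ∨ (∃ j, g j = l) then (1:ℂ) else if a l = b l then 1 else 0)
      = ∏ l : κ, (if (∃ j, g j = l) ∨ (∃ i, f i = l) then (1:ℂ) else if a l = b l then 1 else 0) :=
    Finset.prod_congr rfl fun l _ => if_congr or_comm rfl rfl
  rw [hP]
  ring

lemma embG_mul_cover {ι₁ ι₂ κ : Type*} [Fintype ι₁] [Fintype ι₂] [Fintype κ] [DecidableEq κ]
    (f : ι₁ → κ) (g : ι₂ → κ) (hfg : ∀ i j, f i ≠ g j)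
    (hcov : ∀ l, (∃ i, f i = l) ∨ (∃ j, g j = l))
    (A : Matrix (ι₁ → Fin N) (ι₁ → Fin N) ℂ) (B : Matrix (ι₂ → Fin N) (ι₂ → Fin N) ℂ) :
    embG f A * embG g B = Matrix.of fun a b => A (a ∘ f) (b ∘ f) * B (a ∘ g) (b ∘ g) := by
  rw [embG_mul_disjoint f g hfg]
  ext a b
  simp only [Matrix.of_apply]
  rw [Finset.prod_eq_one fun l _ => if_pos (hcov l), mul_one]

def toM1 (M : Matrix (Fin N) (Fin N) ℂ) : Matrix (Fin 1 → Fin N) (Fin 1 → Fin N) ℂ :=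
  Matrix.of fun a b => M (a 0) (b 0)

def toM2 (Y : Matrix (Fin N × Fin N) (Fin N × Fin N) ℂ) :
    Matrix (Fin 2 → Fin N) (Fin 2 → Fin N) ℂ :=
  Matrix.of fun a b => Y (a 0, a 1) (b 0, b 1)

def toM3 (R : Matrix (Fin N × Fin N × Fin N) (Fin N × Fin N × Fin N) ℂ) :
    Matrix (Fin 3 → Fin N) (Fin 3 → Fin N) ℂ :=
  Matrix.of fun a b => R (a 0, a 1, a 2) (b 0, b 1, b 2)

lemma comp_vec2 {α β : Type*} (f : α → β) (x y : α) : f ∘ ![x, y] = ![f x, f y] := by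
  funext t
  fin_cases t <;> rfl

lemma comp_vec1 {α β : Type*} (f : α → β) (x : α) : f ∘ ![x] = ![f x] := by
  funext t
  fin_cases t <;> rfl

lemma emb2_eq (i j : Fin 3) (Y : Matrix (Fin N × Fin N) (Fin N × Fin N) ℂ) :
    emb2 i j Y = embG ![i, j] (toM2 Y) := by
  ext a b
  simp only [emb2, embG, toM2, Matrix.of_apply]
  congr 1
  refine Finset.prod_congr rfl fun l _ => ?_
  congr 1
  apply propext
  constructor
  · rintro (rfl | rfl)
    exacts [⟨0, rfl⟩, ⟨1, rfl⟩]
  · rintro ⟨t, rfl⟩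
    fin_cases t
    · exact Or.inl rfl
    · exact Or.inr rfl

lemma emb3_eq (i j k : Fin 6) (R : Matrix (Fin N × Fin N × Fin N) (Fin N × Fin N × Fin N) ℂ) :
    emb3 i j k R = embG ![i, j, k] (toM3 R) := by
  ext a b
  simp only [emb3, embG, toM3, Matrix.of_apply]
  congr 1
  refine Finset.prod_congr rfl fun l _ => ?_
  congr 1
  apply propext
  constructor
  · rintro (rfl | rfl | rfl)
    exacts [⟨0, rfl⟩, ⟨1, rfl⟩, ⟨2, rfl⟩]
  · rintro ⟨t, rfl⟩
    fin_cases t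
    · exact Or.inl rfl
    · exact Or.inr (Or.inl rfl)
    · exact Or.inr (Or.inr rfl)

lemma toM2_mul (A B : Matrix (Fin N × Fin N) (Fin N × Fin N) ℂ) :
    toM2 (A * B) = toM2 A * toM2 B := by
  ext a b
  simp only [toM2, Matrix.of_apply, Matrix.mul_apply]
  refine Fintype.sum_equiv (finTwoArrowEquiv (Fin N)).symm _ _ fun p => ?_
  simp [finTwoArrowEquiv]

/-- Abstract tetrahedron computation for `T = Y ⊗ M`. -/
lemma tetra_aux1 {G : Type*} [Monoid G] (a01 a03 a13 a24 b2 b4 b5 : G)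
    (ca1 : Commute a24 a01) (ca3 : Commute a24 a03) (ca13 : Commute a24 a13)
    (cb2a03 : Commute b2 a03) (cb2a13 : Commute b2 a13) (cb4a13 : Commute b4 a13)
    (cb5a24 : Commute b5 a24) (cb5a13 : Commute b5 a13) (cb5a03 : Commute b5 a03)
    (cb5a01 : Commute b5 a01) (cb4a01 : Commute b4 a01)
    (cb2b4 : Commute b2 b4) (cb2b5 : Commute b2 b5) (cb4b5 : Commute b4 b5)
    (hM : a24 * (b2 * b4) = b2 * b4 * a24)
    (hY : a01 * a03 * a13 = a13 * a03 * a01) :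
    a01 * b2 * (a03 * b4) * (a13 * b5) * (a24 * b5) =
      a24 * b5 * (a13 * b5) * (a03 * b4) * (a01 * b2) := by
  have hM' : ∀ c, b2 * (b4 * (a24 * c)) = a24 * (b2 * (b4 * c)) := by
    intro c
    simp only [← mul_assoc]
    rw [← hM]
    simp only [mul_assoc]
  simp only [mul_assoc]
  rw [cb5a24.left_comm, cb4a13.left_comm, cb2a03.left_comm, cb2a13.left_comm, hM']
  rw [cb4a01.left_comm, cb2b4.symm.eq, cb5a03.left_comm, cb5a01.left_comm,
    cb2b5.symm.left_comm, cb4b5.symm.eq, cb5a13.left_comm, cb5a03.left_comm,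
    cb5a01.left_comm, cb2b5.symm.left_comm, cb4b5.symm.left_comm]
  have bridge : ∀ W, a01 * (a03 * (a13 * (a24 * W))) = a24 * (a13 * (a03 * (a01 * W))) := by
    intro W
    simp only [← mul_assoc]
    rw [hY]
    simp only [mul_assoc]
    rw [ca1.symm.left_comm, ca3.symm.left_comm, ca13.symm.left_comm]
  rw [bridge]

/-- Abstract tetrahedron computation for `T' = M ⊗ Y`. -/
lemma tetra_aux2 {G : Type*} [Monoid G] (b0 b1 b2 a12 a34 a35 a45 : G)
    (c0_12 : Commute b0 a12) (c0_34 : Commute b0 a34) (c0_35 : Commute b0 a35)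
    (c0_45 : Commute b0 a45) (c1_34 : Commute b1 a34)
    (c1_45 : Commute b1 a45) (c2_34 : Commute b2 a34) (c2_35 : Commute b2 a35)
    (c01 : Commute b0 b1) (c02 : Commute b0 b2) (c12 : Commute b1 b2)
    (d34 : Commute a12 a34) (d35 : Commute a12 a35) (d45 : Commute a12 a45)
    (hM : a12 * (b1 * b2) = b1 * b2 * a12)
    (hY : a34 * a35 * a45 = a45 * a35 * a34) :
    b0 * a12 * (b0 * a34) * (b1 * a35) * (b2 * a45) =
      b2 * a45 * (b1 * a35) * (b0 * a34) * (b0 * a12) := by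
  have hMl : a12 * b1 * b2 = b1 * b2 * a12 := by rw [mul_assoc]; exact hM
  have hM' : ∀ c, a12 * (b1 * (b2 * c)) = b1 * (b2 * (a12 * c)) := by
    intro c
    simp only [← mul_assoc]
    rw [hMl]
  simp only [mul_assoc]
  rw [c0_12.symm.left_comm, c2_35.symm.left_comm, c1_34.symm.left_comm,
    c2_34.symm.left_comm, hM']
  rw [c0_34.symm.left_comm, c0_35.symm.left_comm, c0_35.symm.left_comm,
    c1_45.symm.left_comm, c0_45.symm.left_comm, c0_45.symm.left_comm,
    c12.symm.left_comm, c02.symm.left_comm, c02.symm.left_comm,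
    c01.symm.left_comm, c01.symm.left_comm]
  have bridge1 : a12 * (a34 * (a35 * a45)) = a45 * (a35 * (a34 * a12)) := by
    rw [d34.left_comm, d35.left_comm, d45.eq]
    simp only [← mul_assoc]
    rw [hY]
  rw [bridge1]

section Decomp
variable {N : ℕ} (Y : Matrix (Fin N × Fin N) (Fin N × Fin N) ℂ) (M : Matrix (Fin N) (Fin N) ℂ)

lemma decompT : toM3 (Matrix.of fun p q : Fin N × Fin N × Fin N =>
      Y (p.1, p.2.1) (q.1, q.2.1) * M p.2.2 q.2.2)
    = embG ![0, 1] (toM2 Y) * embG ![2] (toM1 M) := by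
  rw [embG_mul_cover ![0, 1] ![2] (by decide) (by decide)]
  ext a b
  simp only [toM3, toM2, toM1, Matrix.of_apply]
  rfl

lemma decompT' : toM3 (Matrix.of fun p q : Fin N × Fin N × Fin N =>
      M p.1 q.1 * Y (p.2.1, p.2.2) (q.2.1, q.2.2))
    = embG ![0] (toM1 M) * embG ![1, 2] (toM2 Y) := by
  rw [embG_mul_cover ![0] ![1, 2] (by decide) (by decide)]
  ext a b
  simp only [toM3, toM2, toM1, Matrix.of_apply]
  rfl

lemma toM2_kron : toM2 (M ⊗ₖ M) = embG ![0] (toM1 M) * embG ![1] (toM1 M) := by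
  rw [embG_mul_cover ![0] ![1] (by decide) (by decide)]
  ext a b
  simp only [toM2, toM1, Matrix.of_apply, Matrix.kroneckerMap_apply]
  rfl

end Decomp

end Stmt13

open Stmt13 in
/-- If `Y` satisfies the vertex Yang-Baxter equation and
`Y (M⊗M) = (M⊗M) Y`, then both `T = Y⊗M` and `T' = M⊗Y`, viewed as operators on
`(ℂ^N)^{⊗3}`, satisfy the vertex tetrahedron equation. -/
theorem stmt_13 {N : ℕ}
    (Y : Matrix (Fin N × Fin N) (Fin N × Fin N) ℂ)
    (M : Matrix (Fin N) (Fin N) ℂ)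
    (hY : YBEq Y) (hYM : Y * (M ⊗ₖ M) = (M ⊗ₖ M) * Y) :
    TetraEq (Matrix.of fun p q : Fin N × Fin N × Fin N =>
        Y (p.1, p.2.1) (q.1, q.2.1) * M p.2.2 q.2.2) ∧
      TetraEq (Matrix.of fun p q : Fin N × Fin N × Fin N =>
        M p.1 q.1 * Y (p.2.1, p.2.2) (q.2.1, q.2.2)) := by
  -- transported Yang-Baxter equation
  have hYG : embG (![0, 1] : Fin 2 → Fin 3) (toM2 Y) * embG (![0, 2] : Fin 2 → Fin 3) (toM2 Y) *
        embG (![1, 2] : Fin 2 → Fin 3) (toM2 Y)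
      = embG (![1, 2] : Fin 2 → Fin 3) (toM2 Y) * embG (![0, 2] : Fin 2 → Fin 3) (toM2 Y) *
        embG (![0, 1] : Fin 2 → Fin 3) (toM2 Y) := by
    have h := hY
    unfold YBEq at h
    rw [emb2_eq, emb2_eq, emb2_eq] at h
    exact h
  have key : ∀ v : Fin 3 → Fin 6, Function.Injective v →
      embG (v ∘ ![0, 1]) (toM2 Y) * embG (v ∘ ![0, 2]) (toM2 Y) * embG (v ∘ ![1, 2]) (toM2 Y)
      = embG (v ∘ ![1, 2]) (toM2 Y) * embG (v ∘ ![0, 2]) (toM2 Y) * embG (v ∘ ![0, 1]) (toM2 Y) := by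
    intro v hv
    have h := congrArg (embG v) hYG
    simp only [← embG_mul v hv] at h
    simp only [embG_comp _ v hv] at h
    exact h
  -- transported commutation relation
  have hym : toM2 Y * (embG (![0] : Fin 1 → Fin 2) (toM1 M) * embG (![1] : Fin 1 → Fin 2) (toM1 M))
      = embG (![0] : Fin 1 → Fin 2) (toM1 M) * embG (![1] : Fin 1 → Fin 2) (toM1 M) * toM2 Y := by
    have h := congrArg toM2 hYM
    rw [toM2_mul, toM2_mul, toM2_kron M] at h
    exact h
  have hym6 : ∀ u v : Fin 6, Function.Injective ![u, v] →
      embG ![u, v] (toM2 Y) * (embG ![u] (toM1 M) * embG ![v] (toM1 M))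
      = embG ![u] (toM1 M) * embG ![v] (toM1 M) * embG ![u, v] (toM2 Y) := by
    intro u v huv
    have h := congrArg (embG ![u, v]) hym
    simp only [← embG_mul _ huv] at h
    simp only [embG_comp _ _ huv, comp_vec1, Matrix.cons_val_zero, Matrix.cons_val_one,
      Matrix.head_cons] at h
    exact h
  constructor
  · -- T = Y ⊗ M
    have e3T : ∀ i j k : Fin 6, Function.Injective ![i, j, k] →
        emb3 i j k (Matrix.of fun p q : Fin N × Fin N × Fin N =>
          Y (p.1, p.2.1) (q.1, q.2.1) * M p.2.2 q.2.2)
        = embG ![i, j] (toM2 Y) * embG ![k] (toM1 M) := by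
      intro i j k hijk
      rw [emb3_eq, decompT Y M, ← embG_mul _ hijk, embG_comp _ _ hijk, embG_comp _ _ hijk,
        comp_vec2, comp_vec1]
      simp only [Matrix.cons_val_zero, Matrix.cons_val_one, Matrix.head_cons,
        Matrix.cons_val_two, Matrix.tail_cons]
    unfold TetraEq
    rw [e3T 0 1 2 (by decide), e3T 0 3 4 (by decide), e3T 1 3 5 (by decide),
      e3T 2 4 5 (by decide)]
    have k013 := key ![0, 1, 3] (by decide)
    simp only [comp_vec2, Matrix.cons_val_zero, Matrix.cons_val_one, Matrix.head_cons,
      Matrix.cons_val_two, Matrix.tail_cons] at k013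
    exact tetra_aux1 _ _ _ _ _ _ _
      (embG_comm ![2, 4] ![0, 1] (by decide) _ _)
      (embG_comm ![2, 4] ![0, 3] (by decide) _ _)
      (embG_comm ![2, 4] ![1, 3] (by decide) _ _)
      (embG_comm ![2] ![0, 3] (by decide) _ _)
      (embG_comm ![2] ![1, 3] (by decide) _ _)
      (embG_comm ![4] ![1, 3] (by decide) _ _)
      (embG_comm ![5] ![2, 4] (by decide) _ _)
      (embG_comm ![5] ![1, 3] (by decide) _ _)
      (embG_comm ![5] ![0, 3] (by decide) _ _)
      (embG_comm ![5] ![0, 1] (by decide) _ _)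
      (embG_comm ![4] ![0, 1] (by decide) _ _)
      (embG_comm ![2] ![4] (by decide) _ _)
      (embG_comm ![2] ![5] (by decide) _ _)
      (embG_comm ![4] ![5] (by decide) _ _)
      (hym6 2 4 (by decide)) k013
  · -- T' = M ⊗ Y
    have e3T' : ∀ i j k : Fin 6, Function.Injective ![i, j, k] →
        emb3 i j k (Matrix.of fun p q : Fin N × Fin N × Fin N =>
          M p.1 q.1 * Y (p.2.1, p.2.2) (q.2.1, q.2.2))
        = embG ![i] (toM1 M) * embG ![j, k] (toM2 Y) := by
      intro i j k hijk
      rw [emb3_eq, decompT' Y M, ← embG_mul _ hijk, embG_comp _ _ hijk, embG_comp _ _ hijk,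
        comp_vec2, comp_vec1]
      simp only [Matrix.cons_val_zero, Matrix.cons_val_one, Matrix.head_cons,
        Matrix.cons_val_two, Matrix.tail_cons]
    unfold TetraEq
    rw [e3T' 0 1 2 (by decide), e3T' 0 3 4 (by decide), e3T' 1 3 5 (by decide),
      e3T' 2 4 5 (by decide)]
    have k345 := key ![3, 4, 5] (by decide)
    simp only [comp_vec2, Matrix.cons_val_zero, Matrix.cons_val_one, Matrix.head_cons,
      Matrix.cons_val_two, Matrix.tail_cons] at k345
    exact tetra_aux2 _ _ _ _ _ _ _
      (embG_comm ![0] ![1, 2] (by decide) _ _)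
      (embG_comm ![0] ![3, 4] (by decide) _ _)
      (embG_comm ![0] ![3, 5] (by decide) _ _)
      (embG_comm ![0] ![4, 5] (by decide) _ _)
      (embG_comm ![1] ![3, 4] (by decide) _ _)
      (embG_comm ![1] ![4, 5] (by decide) _ _)
      (embG_comm ![2] ![3, 4] (by decide) _ _)
      (embG_comm ![2] ![3, 5] (by decide) _ _)
      (embG_comm ![0] ![1] (by decide) _ _)
      (embG_comm ![0] ![2] (by decide) _ _)
      (embG_comm ![1] ![2] (by decide) _ _)
      (embG_comm ![1, 2] ![3, 4] (by decide) _ _)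
      (embG_comm ![1, 2] ![3, 5] (by decide) _ _)
      (embG_comm ![1, 2] ![4, 5] (by decide) _ _)
      (hym6 1 2 (by decide)) k345
end

section
/- Let α be a nonzero complex number, let Y be an operator on (ℂ^N)^{⊗2} satisfying the α-twisted vertex Yang–Baxter equation Y₁₂ Y₁₃ Y₂₃ = α · Y₂₃ Y₁₃ Y₁₂ on (ℂ^N)^{⊗3}, and let M be an N×N complex matrix such that (M⊗M)·Y = (1/α) · Y·(M⊗M). Then T = Y⊗M, viewed as an operator on (ℂ^N)^{⊗3}, satisfies the vertex tetrahedron equation. -/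
open Matrix Kronecker

noncomputable section

def e3 {N : ℕ} : ((Fin N × Fin N) × Fin N) ≃ (Fin 3 → Fin N) where
  toFun p := ![p.1.1, p.1.2, p.2]
  invFun v := ((v 0, v 1), v 2)
  left_inv := by rintro ⟨⟨a,b⟩,c⟩; simp
  right_inv := by intro v; funext i; fin_cases i <;> rfl

def e6 {N : ℕ} : ((Fin 3 → Fin N) × (Fin 3 → Fin N)) ≃ (Fin 6 → Fin N) where
  toFun p := ![p.1 0, p.1 1, p.2 0, p.1 2, p.2 1, p.2 2]
  invFun a := (![a 0, a 1, a 3], ![a 2, a 4, a 5])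
  left_inv := by
    rintro ⟨u, v⟩
    refine Prod.ext ?_ ?_ <;> (funext i; fin_cases i <;> rfl)
  right_inv := by intro a; funext i; fin_cases i <;> rfl

def Ψ {N : ℕ} (B : Matrix ((Fin N × Fin N) × Fin N) ((Fin N × Fin N) × Fin N) ℂ) :
    Matrix (Fin 3 → Fin N) (Fin 3 → Fin N) ℂ :=
  B.submatrix e3.symm e3.symm

lemma psi_mul {N : ℕ} (A B : Matrix ((Fin N × Fin N) × Fin N) ((Fin N × Fin N) × Fin N) ℂ) :
    Ψ A * Ψ B = Ψ (A * B) := by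
  simp [Ψ, Matrix.submatrix_mul_equiv _ _ _ (e3.symm) _]

@[simp] lemma cons_val_four' {α : Type*} (a b c d e f : α) : ![a,b,c,d,e,f] 4 = e := rfl
@[simp] lemma cons_val_five' {α : Type*} (a b c d e f : α) : ![a,b,c,d,e,f] 5 = f := rfl

variable {N : ℕ} (Y : Matrix (Fin N × Fin N) (Fin N × Fin N) ℂ)
    (M : Matrix (Fin N) (Fin N) ℂ)

def T (Y : Matrix (Fin N × Fin N) (Fin N × Fin N) ℂ) (M : Matrix (Fin N) (Fin N) ℂ) :
    Matrix (Fin N × Fin N × Fin N) (Fin N × Fin N × Fin N) ℂ :=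
  Matrix.of fun p q : Fin N × Fin N × Fin N =>
      Y (p.1, p.2.1) (q.1, q.2.1) * M p.2.2 q.2.2

lemma key1 : (emb3 0 1 2 (T Y M)).submatrix e6 e6 =
    (emb2 0 1 Y) ⊗ₖ Ψ ((M ⊗ₖ (1 : Matrix (Fin N) (Fin N) ℂ)) ⊗ₖ (1 : Matrix (Fin N) (Fin N) ℂ)) := by
  ext ⟨u,v⟩ ⟨u',v'⟩
  simp [emb3, emb2, Ψ, e6, e3, T, Fin.prod_univ_six, Fin.prod_univ_three,
    Matrix.one_apply, Matrix.submatrix_apply]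
  exact rfl

lemma key2 : (emb3 0 3 4 (T Y M)).submatrix e6 e6 =
    (emb2 0 2 Y) ⊗ₖ Ψ (((1 : Matrix (Fin N) (Fin N) ℂ) ⊗ₖ M) ⊗ₖ (1 : Matrix (Fin N) (Fin N) ℂ)) := by
  ext ⟨u,v⟩ ⟨u',v'⟩
  simp [emb3, emb2, Ψ, e6, e3, T, Fin.prod_univ_six, Fin.prod_univ_three,
    Matrix.one_apply, Matrix.submatrix_apply]
  exact rfl

lemma key3 : (emb3 1 3 5 (T Y M)).submatrix e6 e6 =
    (emb2 1 2 Y) ⊗ₖ Ψ ((1 : Matrix (Fin N × Fin N) (Fin N × Fin N) ℂ) ⊗ₖ M) := by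
  ext ⟨u,v⟩ ⟨u',v'⟩
  simp [emb3, emb2, Ψ, e6, e3, T, Fin.prod_univ_six, Fin.prod_univ_three,
    Matrix.one_apply, Matrix.submatrix_apply, Prod.ext_iff]
  by_cases h0 : v 0 = v' 0 <;> by_cases h1 : v 1 = v' 1 <;> simp [h0, h1]
  exact rfl

lemma key4 : (emb3 2 4 5 (T Y M)).submatrix e6 e6 =
    (1 : Matrix (Fin 3 → Fin N) (Fin 3 → Fin N) ℂ) ⊗ₖ Ψ (Y ⊗ₖ M) := by
  ext ⟨u,v⟩ ⟨u',v'⟩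
  simp [emb3, Ψ, e6, e3, T, Fin.prod_univ_six,
    Matrix.one_apply, Matrix.submatrix_apply]
  by_cases h : u = u'
  · subst h; simp
  · have h2 : ¬ ∀ i, u i = u' i := fun hh => h (funext hh)
    push_neg at h2
    obtain ⟨i, hi⟩ := h2
    fin_cases i <;> simp_all

lemma psi_smul (c : ℂ) (B : Matrix ((Fin N × Fin N) × Fin N) ((Fin N × Fin N) × Fin N) ℂ) :
    Ψ (c • B) = c • Ψ B := rfl


end

/-- If `α ≠ 0`, `Y` satisfies the α-twisted vertex Yang-Baxter equation
`Y₁₂ Y₁₃ Y₂₃ = α · Y₂₃ Y₁₃ Y₁₂` and `(M⊗M) Y = (1/α) · Y (M⊗M)`, then `T = Y⊗M`,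
viewed as an operator on `(ℂ^N)^{⊗3}`, satisfies the vertex tetrahedron equation. -/
theorem stmt_14 {N : ℕ} (α : ℂ) (hα : α ≠ 0)
    (Y : Matrix (Fin N × Fin N) (Fin N × Fin N) ℂ)
    (M : Matrix (Fin N) (Fin N) ℂ)
    (hY : emb2 0 1 Y * emb2 0 2 Y * emb2 1 2 Y =
      α • (emb2 1 2 Y * emb2 0 2 Y * emb2 0 1 Y))
    (hYM : (M ⊗ₖ M) * Y = (1 / α) • (Y * (M ⊗ₖ M))) :
    TetraEq (Matrix.of fun p q : Fin N × Fin N × Fin N =>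
      Y (p.1, p.2.1) (q.1, q.2.1) * M p.2.2 q.2.2) := by
  show TetraEq (T Y M)
  unfold TetraEq
  have hmul : ∀ (A B : Matrix (Fin 6 → Fin N) (Fin 6 → Fin N) ℂ),
      (A * B).submatrix ⇑e6 ⇑e6 = A.submatrix e6 e6 * B.submatrix e6 e6 :=
    fun A B => Matrix.submatrix_mul A B _ _ _ e6.bijective
  have key : (emb3 0 1 2 (T Y M) * emb3 0 3 4 (T Y M) * emb3 1 3 5 (T Y M) *
        emb3 2 4 5 (T Y M)).submatrix ⇑e6 ⇑e6 =
      (emb3 2 4 5 (T Y M) * emb3 1 3 5 (T Y M) * emb3 0 3 4 (T Y M) *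
        emb3 0 1 2 (T Y M)).submatrix ⇑e6 ⇑e6 := by
    rw [hmul, hmul, hmul, hmul, hmul, hmul, key1, key2, key3, key4]
    simp only [psi_mul, ← Matrix.mul_kronecker_mul, Matrix.mul_one, Matrix.one_mul]
    rw [hY, hYM]
    simp only [psi_smul, Matrix.smul_kronecker, Matrix.kronecker_smul, smul_smul]
    rw [Matrix.mul_assoc Y, ← Matrix.mul_kronecker_mul, Matrix.one_mul, Matrix.mul_one,
      one_div_mul_cancel hα, one_smul]
  have h2 := congrArg (fun X => X.submatrix ⇑e6.symm ⇑e6.symm) key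
  simp only [Matrix.submatrix_submatrix, Equiv.self_comp_symm, Matrix.submatrix_id_id] at h2
  exact h2
end

section
/- Let A, B, C be N×N complex matrices that pairwise anticommute (AB = −BA, CA = −AC, CB = −BC). Then for all complex numbers α, β, both operators R = α·A⊗A⊗C + β·B⊗B⊗C and R' = α·C⊗A⊗A + β·C⊗B⊗B on (ℂ^N)^{⊗3} satisfy the vertex tetrahedron equation. -/
open Matrix Kronecker

/-! ### Auxiliary machinery -/

@[simp] lemma vec6_5 {α} (x0 x1 x2 x3 x4 x5 : α) : ![x0,x1,x2,x3,x4,x5] 5 = x5 := rfl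
@[simp] lemma vec6_4 {α} (x0 x1 x2 x3 x4 x5 : α) : ![x0,x1,x2,x3,x4,x5] 4 = x4 := rfl
@[simp] lemma vec6_3 {α} (x0 x1 x2 x3 x4 x5 : α) : ![x0,x1,x2,x3,x4,x5] 3 = x3 := rfl
@[simp] lemma vec6_2 {α} (x0 x1 x2 x3 x4 x5 : α) : ![x0,x1,x2,x3,x4,x5] 2 = x2 := rfl
@[simp] lemma vec6_1 {α} (x0 x1 x2 x3 x4 x5 : α) : ![x0,x1,x2,x3,x4,x5] 1 = x1 := rfl
@[simp] lemma vec6_0 {α} (x0 x1 x2 x3 x4 x5 : α) : ![x0,x1,x2,x3,x4,x5] 0 = x0 := rfl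

/-- A "sitewise" operator on `(ℂ^N)^{⊗6}`: the tensor product of six one-site
operators. -/
noncomputable def bigOp {N : ℕ} (D : Fin 6 → Matrix (Fin N) (Fin N) ℂ) :
    Matrix (Fin 6 → Fin N) (Fin 6 → Fin N) ℂ :=
  Matrix.of fun a b => ∏ l, D l (a l) (b l)

lemma bigOp_mul {N : ℕ} (D E : Fin 6 → Matrix (Fin N) (Fin N) ℂ) :
    bigOp D * bigOp E = bigOp fun l => D l * E l := by
  ext a b
  simp only [bigOp, Matrix.mul_apply, Matrix.of_apply]
  rw [Finset.prod_univ_sum]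
  simp [Fintype.piFinset_univ, ← Finset.prod_mul_distrib]

lemma bigOp_congr_smul {N : ℕ} (D E : Fin 6 → Matrix (Fin N) (Fin N) ℂ)
    (s : Fin 6 → ℂ) (h : ∀ l, D l = s l • E l) (hs : ∏ l, s l = 1) :
    bigOp D = bigOp E := by
  ext a b
  simp only [bigOp, Matrix.of_apply]
  calc ∏ l, D l (a l) (b l) = ∏ l, s l * E l (a l) (b l) := by
        refine Finset.prod_congr rfl fun l _ => ?_; rw [h l]; rfl
    _ = (∏ l, s l) * ∏ l, E l (a l) (b l) := Finset.prod_mul_distrib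
    _ = _ := by rw [hs, one_mul]

lemma emb012 {N : ℕ} (X Y Z : Matrix (Fin N) (Fin N) ℂ) :
    emb3 0 1 2 (X ⊗ₖ (Y ⊗ₖ Z)) = bigOp ![X, Y, Z, 1, 1, 1] := by
  ext a b
  simp [emb3, bigOp, Fin.prod_univ_six, Matrix.one_apply, Matrix.kroneckerMap_apply,
    mul_ite, ite_mul, mul_one, mul_zero, zero_mul, one_mul]
  split_ifs <;> ring

lemma emb034 {N : ℕ} (X Y Z : Matrix (Fin N) (Fin N) ℂ) :
    emb3 0 3 4 (X ⊗ₖ (Y ⊗ₖ Z)) = bigOp ![X, 1, 1, Y, Z, 1] := by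
  ext a b
  simp [emb3, bigOp, Fin.prod_univ_six, Matrix.one_apply, Matrix.kroneckerMap_apply,
    mul_ite, ite_mul, mul_one, mul_zero, zero_mul, one_mul]
  split_ifs <;> ring

lemma emb135 {N : ℕ} (X Y Z : Matrix (Fin N) (Fin N) ℂ) :
    emb3 1 3 5 (X ⊗ₖ (Y ⊗ₖ Z)) = bigOp ![1, X, 1, Y, 1, Z] := by
  ext a b
  simp [emb3, bigOp, Fin.prod_univ_six, Matrix.one_apply, Matrix.kroneckerMap_apply,
    mul_ite, ite_mul, mul_one, mul_zero, zero_mul, one_mul]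
  split_ifs <;> ring

lemma emb245 {N : ℕ} (X Y Z : Matrix (Fin N) (Fin N) ℂ) :
    emb3 2 4 5 (X ⊗ₖ (Y ⊗ₖ Z)) = bigOp ![1, 1, X, 1, Y, Z] := by
  ext a b
  simp [emb3, bigOp, Fin.prod_univ_six, Matrix.one_apply, Matrix.kroneckerMap_apply,
    mul_ite, ite_mul, mul_one, mul_zero, zero_mul, one_mul]
  split_ifs <;> ring

lemma emb3_lin {N : ℕ} (i j k : Fin 6) (α β : ℂ)
    (P Q : Matrix (Fin N × Fin N × Fin N) (Fin N × Fin N × Fin N) ℂ) :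
    emb3 i j k (α • P + β • Q) = α • emb3 i j k P + β • emb3 i j k Q := by
  ext a b
  simp [emb3]
  ring

section key
variable {N : ℕ} (A B C : Matrix (Fin N) (Fin N) ℂ)

lemma swapXX (hAB : A * B = -(B * A)) (a b : Bool) :
    cond a A B * cond b A B = (if a = b then (1:ℂ) else -1) • (cond b A B * cond a A B) := by
  cases a <;> cases b <;> simp [hAB]

lemma swapXC (hCA : C * A = -(A * C)) (hCB : C * B = -(B * C)) (a : Bool) :
    C * cond a A B = (-1:ℂ) • (cond a A B * C) := by
  cases a <;> simp [hCA, hCB]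

lemma swapCX (hCA : C * A = -(A * C)) (hCB : C * B = -(B * C)) (a : Bool) :
    cond a A B * C = (-1:ℂ) • (C * cond a A B) := by
  cases a <;> simp [hCA, hCB]

lemma keyR (hAB : A * B = -(B * A)) (hCA : C * A = -(A * C)) (hCB : C * B = -(B * C))
    (e1 e2 e3 e4 : Bool) :
    bigOp ![cond e1 A B, cond e1 A B, C, 1, 1, 1] * bigOp ![cond e2 A B, 1, 1, cond e2 A B, C, 1] *
      bigOp ![1, cond e3 A B, 1, cond e3 A B, 1, C] * bigOp ![1, 1, cond e4 A B, 1, cond e4 A B, C] =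
    bigOp ![1, 1, cond e4 A B, 1, cond e4 A B, C] * bigOp ![1, cond e3 A B, 1, cond e3 A B, 1, C] *
      bigOp ![cond e2 A B, 1, 1, cond e2 A B, C, 1] * bigOp ![cond e1 A B, cond e1 A B, C, 1, 1, 1] := by
  simp only [bigOp_mul]
  refine bigOp_congr_smul _ _
    ![if e1 = e2 then 1 else -1, if e1 = e3 then 1 else -1, -1,
      if e2 = e3 then 1 else -1, -1, 1] (fun l => ?_) ?_
  · fin_cases l
    · simpa using swapXX A B hAB e1 e2
    · simpa using swapXX A B hAB e1 e3
    · simpa using swapXC A B C hCA hCB e4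
    · simpa using swapXX A B hAB e2 e3
    · simpa using swapXC A B C hCA hCB e4
    · simp
  · simp only [Fin.prod_univ_six]
    cases e1 <;> cases e2 <;> cases e3 <;> simp

lemma keyR' (hAB : A * B = -(B * A)) (hCA : C * A = -(A * C)) (hCB : C * B = -(B * C))
    (e1 e2 e3 e4 : Bool) :
    bigOp ![C, cond e1 A B, cond e1 A B, 1, 1, 1] * bigOp ![C, 1, 1, cond e2 A B, cond e2 A B, 1] *
      bigOp ![1, C, 1, cond e3 A B, 1, cond e3 A B] * bigOp ![1, 1, C, 1, cond e4 A B, cond e4 A B] =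
    bigOp ![1, 1, C, 1, cond e4 A B, cond e4 A B] * bigOp ![1, C, 1, cond e3 A B, 1, cond e3 A B] *
      bigOp ![C, 1, 1, cond e2 A B, cond e2 A B, 1] * bigOp ![C, cond e1 A B, cond e1 A B, 1, 1, 1] := by
  simp only [bigOp_mul]
  refine bigOp_congr_smul _ _
    ![1, -1, -1, if e2 = e3 then 1 else -1, if e2 = e4 then 1 else -1,
      if e3 = e4 then 1 else -1] (fun l => ?_) ?_
  · fin_cases l
    · simp
    · simpa using swapCX A B C hCA hCB e1
    · simpa using swapCX A B C hCA hCB e1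
    · simpa using swapXX A B hAB e2 e3
    · simpa using swapXX A B hAB e2 e4
    · simpa using swapXX A B hAB e3 e4
  · simp only [Fin.prod_univ_six]
    cases e2 <;> cases e3 <;> cases e4 <;> simp

end key

lemma master {N : ℕ} (T1 T2 T3 T4 : Bool → Matrix (Fin 6 → Fin N) (Fin 6 → Fin N) ℂ)
    (h : ∀ e1 e2 e3 e4, T1 e1 * T2 e2 * T3 e3 * T4 e4 = T4 e4 * T3 e3 * T2 e2 * T1 e1)
    (α β : ℂ) :
    (α • T1 true + β • T1 false) * (α • T2 true + β • T2 false) *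
      (α • T3 true + β • T3 false) * (α • T4 true + β • T4 false) =
    (α • T4 true + β • T4 false) * (α • T3 true + β • T3 false) *
      (α • T2 true + β • T2 false) * (α • T1 true + β • T1 false) := by
  simp only [add_mul, mul_add, smul_mul_assoc, mul_smul_comm, h]
  module

/-- If `A`, `B`, `C` pairwise anticommute, then for all `α, β ∈ ℂ`
both `R = α A⊗A⊗C + β B⊗B⊗C` and `R' = α C⊗A⊗A + β C⊗B⊗B` satisfy the vertex
tetrahedron equation. -/
theorem stmt_15 {N : ℕ} (A B C : Matrix (Fin N) (Fin N) ℂ)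
    (hAB : A * B = -(B * A)) (hCA : C * A = -(A * C)) (hCB : C * B = -(B * C))
    (α β : ℂ) :
    TetraEq (α • (A ⊗ₖ (A ⊗ₖ C)) + β • (B ⊗ₖ (B ⊗ₖ C))) ∧
      TetraEq (α • (C ⊗ₖ (A ⊗ₖ A)) + β • (C ⊗ₖ (B ⊗ₖ B))) := by
  constructor
  · unfold TetraEq
    simp only [emb3_lin, emb012, emb034, emb135, emb245]
    exact master (fun b => bigOp ![cond b A B, cond b A B, C, 1, 1, 1])
      (fun b => bigOp ![cond b A B, 1, 1, cond b A B, C, 1])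
      (fun b => bigOp ![1, cond b A B, 1, cond b A B, 1, C])
      (fun b => bigOp ![1, 1, cond b A B, 1, cond b A B, C])
      (keyR A B C hAB hCA hCB) α β
  · unfold TetraEq
    simp only [emb3_lin, emb012, emb034, emb135, emb245]
    exact master (fun b => bigOp ![C, cond b A B, cond b A B, 1, 1, 1])
      (fun b => bigOp ![C, 1, 1, cond b A B, cond b A B, 1])
      (fun b => bigOp ![1, C, 1, cond b A B, 1, cond b A B])
      (fun b => bigOp ![1, 1, C, 1, cond b A B, cond b A B])
      (keyR' A B C hAB hCA hCB) α β
end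

section
/- Let A and B be N×N complex matrices with AB = −BA. Then for all complex numbers α, β, the operator Y = α·A⊗A + β·B⊗B on (ℂ^N)^{⊗2} satisfies the vertex Yang–Baxter equation Y₁₂ Y₁₃ Y₂₃ = Y₂₃ Y₁₃ Y₁₂ on (ℂ^N)^{⊗3}. -/
open Matrix Kronecker

noncomputable def T3 {N : ℕ} (f : Fin 3 → Matrix (Fin N) (Fin N) ℂ) :
    Matrix (Fin 3 → Fin N) (Fin 3 → Fin N) ℂ :=
  Matrix.of fun a b => ∏ l : Fin 3, f l (a l) (b l)

lemma emb2_01 {N : ℕ} (X Z : Matrix (Fin N) (Fin N) ℂ) :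
    emb2 0 1 (X ⊗ₖ Z) = T3 ![X, Z, 1] := by
  ext a b
  simp [emb2, T3, Fin.prod_univ_three, kroneckerMap_apply, Matrix.one_apply]

lemma emb2_02 {N : ℕ} (X Z : Matrix (Fin N) (Fin N) ℂ) :
    emb2 0 2 (X ⊗ₖ Z) = T3 ![X, 1, Z] := by
  ext a b
  simp [emb2, T3, Fin.prod_univ_three, kroneckerMap_apply, Matrix.one_apply]

lemma emb2_12 {N : ℕ} (X Z : Matrix (Fin N) (Fin N) ℂ) :
    emb2 1 2 (X ⊗ₖ Z) = T3 ![1, X, Z] := by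
  ext a b
  simp [emb2, T3, Fin.prod_univ_three, kroneckerMap_apply, Matrix.one_apply]

lemma emb2_lin {N : ℕ} (i j : Fin 3) (Y Z : Matrix (Fin N × Fin N) (Fin N × Fin N) ℂ) (α β : ℂ) :
    emb2 i j (α • Y + β • Z) = α • emb2 i j Y + β • emb2 i j Z := by
  ext a b
  simp [emb2]; ring

lemma T3_mul {N : ℕ} (f g : Fin 3 → Matrix (Fin N) (Fin N) ℂ) :
    T3 f * T3 g = T3 (fun l => f l * g l) := by
  ext a c
  simp only [T3, Matrix.mul_apply, Matrix.of_apply]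
  rw [eq_comm]
  calc ∏ l : Fin 3, ∑ k : Fin N, f l (a l) k * g l k (c l)
      = ∑ b ∈ Fintype.piFinset (fun _ : Fin 3 => (Finset.univ : Finset (Fin N))),
          ∏ l : Fin 3, f l (a l) (b l) * g l (b l) (c l) := by
        rw [Finset.prod_univ_sum]
    _ = ∑ b : Fin 3 → Fin N, (∏ l : Fin 3, f l (a l) (b l)) * ∏ l : Fin 3, g l (b l) (c l) := by
        simp [Finset.prod_mul_distrib]

lemma mulvec3 {N : ℕ} (X Y Z X' Y' Z' X'' Y'' Z'' : Matrix (Fin N) (Fin N) ℂ) :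
    (fun l => ![X,Y,Z] l * ![X',Y',Z'] l * ![X'',Y'',Z''] l) = ![X*X'*X'', Y*Y'*Y'', Z*Z'*Z''] := by
  funext l; fin_cases l <;> simp

lemma T3_negl0 {N : ℕ} (P Q R : Matrix (Fin N) (Fin N) ℂ) :
    T3 ![-P, Q, R] = -T3 ![P, Q, R] := by
  ext a b; simp [T3, Fin.prod_univ_three]

lemma T3_negl1 {N : ℕ} (P Q R : Matrix (Fin N) (Fin N) ℂ) :
    T3 ![P, -Q, R] = -T3 ![P, Q, R] := by
  ext a b; simp [T3, Fin.prod_univ_three]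

lemma T3_negl2 {N : ℕ} (P Q R : Matrix (Fin N) (Fin N) ℂ) :
    T3 ![P, Q, -R] = -T3 ![P, Q, R] := by
  ext a b; simp [T3, Fin.prod_univ_three]

/-- If `AB = -BA`, then for all `α, β ∈ ℂ` the operator
`Y = α A⊗A + β B⊗B` satisfies the vertex Yang-Baxter equation. -/
theorem stmt_17 {N : ℕ} (A B : Matrix (Fin N) (Fin N) ℂ)
    (hAB : A * B = -(B * A)) (α β : ℂ) :
    YBEq (α • (A ⊗ₖ A) + β • (B ⊗ₖ B)) := by
  have hBA : B * A = -(A * B) := by rw [hAB, neg_neg]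
  unfold YBEq
  rw [emb2_lin, emb2_lin, emb2_lin, emb2_01, emb2_01, emb2_02, emb2_02, emb2_12, emb2_12]
  simp only [Matrix.add_mul, Matrix.mul_add, Matrix.smul_mul, Matrix.mul_smul, smul_smul,
    T3_mul, mulvec3, Matrix.one_mul, Matrix.mul_one]
  simp only [hAB, T3_negl0, T3_negl1, T3_negl2, smul_neg, neg_neg]
  module
end

section
/- Let A, B, C be N×N complex matrices that pairwise anticommute (AB = −BA, CA = −AC, CB = −BC), and let α, β be complex numbers. Set R = α·A⊗C⊗A + β·B⊗C⊗B and R⁻ = α·A⊗C⊗A − β·B⊗C⊗B, both operators on (ℂ^N)^{⊗3}. Then R₁₂₃ R₁₄₅ R₂₄₆ R₃₅₆ = R₃₅₆ (R⁻)₂₄₆ (R⁻)₁₄₅ R₁₂₃ as operators on (ℂ^N)^{⊗6}. -/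
open Matrix Kronecker

/-- The operator acting as `M l` on factor `l` for each `l`. -/
noncomputable def embAll {N : ℕ} (M : Fin 6 → Matrix (Fin N) (Fin N) ℂ) :
    Matrix (Fin 6 → Fin N) (Fin 6 → Fin N) ℂ :=
  Matrix.of fun a b => ∏ l : Fin 6, M l (a l) (b l)

lemma embAll_mul {N : ℕ} (M M' : Fin 6 → Matrix (Fin N) (Fin N) ℂ) :
    embAll M * embAll M' = embAll (fun l => M l * M' l) := by
  ext a b
  simp only [embAll, Matrix.mul_apply, Matrix.of_apply]
  rw [Finset.prod_univ_sum]
  simp [Finset.prod_mul_distrib]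

noncomputable def F1 {N : ℕ} (X C : Matrix (Fin N) (Fin N) ℂ) : Fin 6 → Matrix (Fin N) (Fin N) ℂ :=
  fun l => if l = 0 then X else if l = 1 then C else if l = 2 then X else 1
noncomputable def F2 {N : ℕ} (X C : Matrix (Fin N) (Fin N) ℂ) : Fin 6 → Matrix (Fin N) (Fin N) ℂ :=
  fun l => if l = 0 then X else if l = 3 then C else if l = 4 then X else 1
noncomputable def F3 {N : ℕ} (X C : Matrix (Fin N) (Fin N) ℂ) : Fin 6 → Matrix (Fin N) (Fin N) ℂ :=
  fun l => if l = 1 then X else if l = 3 then C else if l = 5 then X else 1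
noncomputable def F4 {N : ℕ} (X C : Matrix (Fin N) (Fin N) ℂ) : Fin 6 → Matrix (Fin N) (Fin N) ℂ :=
  fun l => if l = 2 then X else if l = 4 then C else if l = 5 then X else 1

lemma emb3_012 {N : ℕ} (X C : Matrix (Fin N) (Fin N) ℂ) :
    emb3 0 1 2 (X ⊗ₖ (C ⊗ₖ X)) = embAll (F1 X C) := by
  ext a b
  simp [emb3, embAll, F1, Fin.prod_univ_six, Matrix.one_apply, kroneckerMap_apply]
  ring_nf

lemma emb3_034 {N : ℕ} (X C : Matrix (Fin N) (Fin N) ℂ) :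
    emb3 0 3 4 (X ⊗ₖ (C ⊗ₖ X)) = embAll (F2 X C) := by
  ext a b
  simp [emb3, embAll, F2, Fin.prod_univ_six, Matrix.one_apply, kroneckerMap_apply]
  ring_nf

lemma emb3_135 {N : ℕ} (X C : Matrix (Fin N) (Fin N) ℂ) :
    emb3 1 3 5 (X ⊗ₖ (C ⊗ₖ X)) = embAll (F3 X C) := by
  ext a b
  simp [emb3, embAll, F3, Fin.prod_univ_six, Matrix.one_apply, kroneckerMap_apply]
  ring_nf

lemma emb3_245 {N : ℕ} (X C : Matrix (Fin N) (Fin N) ℂ) :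
    emb3 2 4 5 (X ⊗ₖ (C ⊗ₖ X)) = embAll (F4 X C) := by
  ext a b
  simp [emb3, embAll, F4, Fin.prod_univ_six, Matrix.one_apply, kroneckerMap_apply]
  ring_nf

lemma emb3_add {N : ℕ} (i j k : Fin 6)
    (P Q : Matrix (Fin N × Fin N × Fin N) (Fin N × Fin N × Fin N) ℂ) :
    emb3 i j k (P + Q) = emb3 i j k P + emb3 i j k Q := by
  ext a b; simp [emb3]; ring

lemma emb3_sub {N : ℕ} (i j k : Fin 6)
    (P Q : Matrix (Fin N × Fin N × Fin N) (Fin N × Fin N × Fin N) ℂ) :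
    emb3 i j k (P - Q) = emb3 i j k P - emb3 i j k Q := by
  ext a b; simp [emb3]; ring

lemma emb3_smul {N : ℕ} (i j k : Fin 6) (c : ℂ)
    (P : Matrix (Fin N × Fin N × Fin N) (Fin N × Fin N × Fin N) ℂ) :
    emb3 i j k (c • P) = c • emb3 i j k P := by
  ext a b; simp [emb3]; ring

lemma key {N : ℕ} (X Y Z W C : Matrix (Fin N) (Fin N) ℂ) (s1 s3 s5 : ℂ)
    (h1 : Y * X = s1 • (X * Y)) (h2 : Z * C = -(C * Z)) (h3 : W * X = s3 • (X * W))
    (h4 : C * Y = -(Y * C)) (h5 : W * Z = s5 • (Z * W)) :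
    embAll (fun l => ((F4 W C l * F3 Z C l) * F2 Y C l) * F1 X C l) =
      (s1 * s3 * s5) • embAll (fun l => ((F1 X C l * F2 Y C l) * F3 Z C l) * F4 W C l) := by
  ext a b
  simp only [embAll, Matrix.of_apply, Matrix.smul_apply, Fin.prod_univ_six, F1, F2, F3, F4]
  simp only [Fin.reduceEq, reduceIte, Matrix.mul_one, Matrix.one_mul]
  rw [h1, h2, h3, h4, h5]
  simp only [Matrix.smul_apply, Matrix.neg_apply, smul_eq_mul]
  ring

/-- For pairwise anticommuting `A`, `B`, `C` and `α, β ∈ ℂ`,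
setting `R = α A⊗C⊗A + β B⊗C⊗B` and `R⁻ = α A⊗C⊗A − β B⊗C⊗B`, one has
`R₁₂₃ R₁₄₅ R₂₄₆ R₃₅₆ = R₃₅₆ (R⁻)₂₄₆ (R⁻)₁₄₅ R₁₂₃`. -/
theorem stmt_18 {N : ℕ} (A B C : Matrix (Fin N) (Fin N) ℂ)
    (hAB : A * B = -(B * A)) (hCA : C * A = -(A * C)) (hCB : C * B = -(B * C))
    (α β : ℂ)
    (R Rm : Matrix (Fin N × Fin N × Fin N) (Fin N × Fin N × Fin N) ℂ)
    (hR : R = α • (A ⊗ₖ (C ⊗ₖ A)) + β • (B ⊗ₖ (C ⊗ₖ B)))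
    (hRm : Rm = α • (A ⊗ₖ (C ⊗ₖ A)) - β • (B ⊗ₖ (C ⊗ₖ B))) :
    emb3 0 1 2 R * emb3 0 3 4 R * emb3 1 3 5 R * emb3 2 4 5 R =
      emb3 2 4 5 R * emb3 1 3 5 Rm * emb3 0 3 4 Rm * emb3 0 1 2 R := by
  have qAA : A * A = (1 : ℂ) • (A * A) := (one_smul ℂ _).symm
  have qBB : B * B = (1 : ℂ) • (B * B) := (one_smul ℂ _).symm
  have qAB : B * A = (-1 : ℂ) • (A * B) := by rw [neg_one_smul, hAB, neg_neg]
  have qBA : A * B = (-1 : ℂ) • (B * A) := by rw [neg_one_smul]; exact hAB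
  have q2A : A * C = -(C * A) := by rw [hCA, neg_neg]
  have q2B : B * C = -(C * B) := by rw [hCB, neg_neg]
  have L1 : emb3 0 1 2 R = α • embAll (F1 A C) + β • embAll (F1 B C) := by
    rw [hR, emb3_add, emb3_smul, emb3_smul, emb3_012, emb3_012]
  have L2 : emb3 0 3 4 R = α • embAll (F2 A C) + β • embAll (F2 B C) := by
    rw [hR, emb3_add, emb3_smul, emb3_smul, emb3_034, emb3_034]
  have L3 : emb3 1 3 5 R = α • embAll (F3 A C) + β • embAll (F3 B C) := by
    rw [hR, emb3_add, emb3_smul, emb3_smul, emb3_135, emb3_135]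
  have L4 : emb3 2 4 5 R = α • embAll (F4 A C) + β • embAll (F4 B C) := by
    rw [hR, emb3_add, emb3_smul, emb3_smul, emb3_245, emb3_245]
  have L2m : emb3 0 3 4 Rm = α • embAll (F2 A C) - β • embAll (F2 B C) := by
    rw [hRm, emb3_sub, emb3_smul, emb3_smul, emb3_034, emb3_034]
  have L3m : emb3 1 3 5 Rm = α • embAll (F3 A C) - β • embAll (F3 B C) := by
    rw [hRm, emb3_sub, emb3_smul, emb3_smul, emb3_135, emb3_135]
  rw [L1, L2, L3, L4, L2m, L3m]
  simp only [add_mul, mul_add, sub_mul, mul_sub, smul_mul_assoc, mul_smul_comm,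
    smul_smul, embAll_mul]
  rw [
    key A A A A C 1 1 1 qAA q2A qAA hCA qAA,
    key A A A B C 1 (-1) (-1) qAA q2A qAB hCA qAB,
    key A A B A C 1 1 (-1) qAA q2B qAA hCA qBA,
    key A A B B C 1 (-1) 1 qAA q2B qAB hCA qBB,
    key A B A A C (-1) 1 1 qAB q2A qAA hCB qAA,
    key A B A B C (-1) (-1) (-1) qAB q2A qAB hCB qAB,
    key A B B A C (-1) 1 (-1) qAB q2B qAA hCB qBA,
    key A B B B C (-1) (-1) 1 qAB q2B qAB hCB qBB,
    key B A A A C (-1) (-1) 1 qBA q2A qBA hCA qAA,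
    key B A A B C (-1) 1 (-1) qBA q2A qBB hCA qAB,
    key B A B A C (-1) (-1) (-1) qBA q2B qBA hCA qBA,
    key B A B B C (-1) 1 1 qBA q2B qBB hCA qBB,
    key B B A A C 1 (-1) 1 qBB q2A qBA hCB qAA,
    key B B A B C 1 1 (-1) qBB q2A qBB hCB qAB,
    key B B B A C 1 (-1) (-1) qBB q2B qBA hCB qBA,
    key B B B B C 1 1 1 qBB q2B qBB hCB qBB
  ]
  module
end
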